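/- Fix positive integers d and n, and let the dataset space be D = {x ∈ ℕ^d : Σ_j x_j = n} (histograms of datasets with n records). Suppose M is a conditional probability kernel from ℕ^d to a finite output alphabet such that Pr[M(x) = z] ≤ e^ε·Pr[M(x') = z] whenever ‖x − x'‖₁ = 1. Then for every random dataset X supported on D, the mutual information between the dataset and the mechanism output satisfies I(X; M(X)) ≤ 2εn nats (hence at most 3εn bits). -/
import Mathlib


open Real
open scoped BigOperators

/-- The mutual information `I(X; M(X))` (in nats) between an input `X ∼ P` and the
output of a channel `K`. -/
noncomputable def infoCost {A 𝒵 : Type*} [Fintype A] [Fintype 𝒵]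
    (P : A → ℝ) (K : A → 𝒵 → ℝ) : ℝ :=
  ∑ x, ∑ z, P x * K x z * log (K x z / ∑ x', P x' * K x' z)

/-- The set `D` of histograms of datasets with `n` records over `d` types,
represented with entries in `Fin (n+1)` (each count is at most `n`). -/
def Histo (d n : ℕ) : Type := {x : Fin d → Fin (n + 1) // ∑ j, (x j : ℕ) = n}

instance (d n : ℕ) : Fintype (Histo d n) := by unfold Histo; infer_instance

lemma dp_path {𝒵 : Type*} [Fintype 𝒵] {d : ℕ} (M : (Fin d → ℕ) → 𝒵 → ℝ) (ε : ℝ)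
    (hDP : ∀ x x' : Fin d → ℕ, (∑ j, ((x j : ℤ) - (x' j : ℤ)).natAbs) = 1 →
      ∀ z, M x z ≤ exp ε * M x' z)
    (hM0 : ∀ x z, 0 ≤ M x z) :
    ∀ m : ℕ, ∀ x x' : Fin d → ℕ, (∑ j, ((x j : ℤ) - (x' j : ℤ)).natAbs) = m →
      ∀ z, M x z ≤ exp (ε * m) * M x' z := by
  intro m
  induction m with
  | zero =>
    intro x x' h z
    have hxx : x = x' := by
      funext j
      have hj := Finset.sum_eq_zero_iff.mp h j (Finset.mem_univ j)
      omega
    subst hxx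
    simp
  | succ m ih =>
    intro x x' h z
    have hex : ∃ j, x j ≠ x' j := by
      by_contra hc
      push_neg at hc
      simp [hc] at h
    obtain ⟨j, hj⟩ := hex
    set y : Fin d → ℕ := Function.update x j (if x' j < x j then x j - 1 else x j + 1)
      with hy
    have hyj : y j = if x' j < x j then x j - 1 else x j + 1 := by
      simp [hy]
    have hyk : ∀ k, k ≠ j → y k = x k := by
      intro k hk
      simp [hy, Function.update_of_ne hk]
    have hterm : ((x j : ℤ) - (y j : ℤ)).natAbs = 1 := by
      rw [hyj]; split <;> omega
    have h1 : (∑ j', ((x j' : ℤ) - (y j' : ℤ)).natAbs) = 1 := by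
      rw [Finset.sum_eq_single j]
      · exact hterm
      · intro k _ hk
        rw [hyk k hk]; omega
      · intro hcon; exact absurd (Finset.mem_univ j) hcon
    have h2 : (∑ j', ((y j' : ℤ) - (x' j' : ℤ)).natAbs) = m := by
      have e1 : ((x j : ℤ) - (x' j : ℤ)).natAbs
          + ∑ k ∈ Finset.univ.erase j, ((x k : ℤ) - (x' k : ℤ)).natAbs
          = ∑ k, ((x k : ℤ) - (x' k : ℤ)).natAbs :=
        Finset.add_sum_erase _ (fun k => ((x k : ℤ) - (x' k : ℤ)).natAbs) (Finset.mem_univ j)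
      have e2 : ((y j : ℤ) - (x' j : ℤ)).natAbs
          + ∑ k ∈ Finset.univ.erase j, ((y k : ℤ) - (x' k : ℤ)).natAbs
          = ∑ k, ((y k : ℤ) - (x' k : ℤ)).natAbs :=
        Finset.add_sum_erase _ (fun k => ((y k : ℤ) - (x' k : ℤ)).natAbs) (Finset.mem_univ j)
      have e3 : ∑ k ∈ Finset.univ.erase j, ((y k : ℤ) - (x' k : ℤ)).natAbs
          = ∑ k ∈ Finset.univ.erase j, ((x k : ℤ) - (x' k : ℤ)).natAbs := by
        apply Finset.sum_congr rfl
        intro k hk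
        rw [hyk k (Finset.ne_of_mem_erase hk)]
      have e4 : ((y j : ℤ) - (x' j : ℤ)).natAbs
          = ((x j : ℤ) - (x' j : ℤ)).natAbs - 1 := by
        rw [hyj]; split <;> omega
      have e5 : 1 ≤ ((x j : ℤ) - (x' j : ℤ)).natAbs := by omega
      omega
    have step1 := hDP x y h1 z
    have step2 := ih y x' h2 z
    calc M x z ≤ exp ε * M y z := step1
      _ ≤ exp ε * (exp (ε * m) * M x' z) := by
          exact mul_le_mul_of_nonneg_left step2 (le_of_lt (exp_pos ε))
      _ = exp (ε * ((m : ℝ) + 1)) * M x' z := by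
          rw [← mul_assoc, ← exp_add]; ring_nf
      _ = exp (ε * ((m + 1 : ℕ) : ℝ)) * M x' z := by push_cast; ring_nf
  
/-- If `M` is a conditional probability kernel from `ℕ^d` to a finite output alphabet
with `Pr[M(x) = z] ≤ e^ε·Pr[M(x') = z]` whenever `‖x − x'‖₁ = 1`, then for every
random dataset `X` supported on `D = {x ∈ ℕ^d : Σ_j x_j = n}`, the mutual information
satisfies `I(X; M(X)) ≤ 2εn` nats (hence at most `3εn` bits). -/
theorem mutual_info_le_of_dp_mechanism {𝒵 : Type*} [Fintype 𝒵]
    (d n : ℕ) (M : (Fin d → ℕ) → 𝒵 → ℝ) (ε : ℝ) (hε : 0 ≤ ε)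
    (hM0 : ∀ x z, 0 ≤ M x z) (hM1 : ∀ x, ∑ z, M x z = 1)
    (hDP : ∀ x x' : Fin d → ℕ, (∑ j, ((x j : ℤ) - (x' j : ℤ)).natAbs) = 1 →
      ∀ z, M x z ≤ exp ε * M x' z) :
    ∀ P : Histo d n → ℝ, (∀ x, 0 ≤ P x) → (∑ x, P x = 1) →
      infoCost P (fun x z => M (fun j => (x.1 j : ℕ)) z) ≤ 2 * ε * n := by
  intro P hP0 hP1
  set K : Histo d n → 𝒵 → ℝ := fun x z => M (fun j => (x.1 j : ℕ)) z with hK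
  -- uniform ratio bound between any two histograms
  have hratio : ∀ x x' : Histo d n, ∀ z, K x z ≤ exp (2 * ε * n) * K x' z := by
    intro x x' z
    set a : Fin d → ℕ := fun j => (x.1 j : ℕ)
    set b : Fin d → ℕ := fun j => (x'.1 j : ℕ)
    set m : ℕ := ∑ j, ((a j : ℤ) - (b j : ℤ)).natAbs with hm
    have hmle : m ≤ 2 * n := by
      have hle : m ≤ ∑ j, (a j + b j) := by
        apply Finset.sum_le_sum
        intro j _
        omega
      have : ∑ j, (a j + b j) = 2 * n := by
        rw [Finset.sum_add_distrib]
        have h1 : ∑ j, a j = n := x.2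
        have h2 : ∑ j, b j = n := x'.2
        omega
      omega
    have hpath := dp_path M ε hDP hM0 m a b rfl z
    have hexp : exp (ε * m) ≤ exp (2 * ε * n) := by
      apply exp_le_exp.mpr
      have : (m : ℝ) ≤ 2 * n := by exact_mod_cast hmle
      nlinarith
    calc K x z ≤ exp (ε * m) * K x' z := hpath
      _ ≤ exp (2 * ε * n) * K x' z :=
        mul_le_mul_of_nonneg_right hexp (hM0 _ z)
  have hK0 : ∀ x z, 0 ≤ K x z := fun x z => hM0 _ z
  -- pointwise bound on each term
  have hterm : ∀ (x : Histo d n) (z : 𝒵),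
      P x * K x z * log (K x z / ∑ x', P x' * K x' z)
        ≤ P x * K x z * (2 * ε * n) := by
    intro x z
    rcases eq_or_lt_of_le (mul_nonneg (hP0 x) (hK0 x z)) with heq | hpos
    · rw [← heq]; simp
    · -- P x * K x z > 0, so P x > 0, K x z > 0
      have hPx : 0 < P x := by
        rcases (hP0 x).lt_or_eq with h | h
        · exact h
        · exfalso; rw [← h] at hpos; simp at hpos
      have hKx : 0 < K x z := by
        rcases (hK0 x z).lt_or_eq with h | h
        · exact h
        · exfalso; rw [← h] at hpos; simp at hpos
      apply mul_le_mul_of_nonneg_left _ (le_of_lt hpos)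
      have hQ : exp (-(2 * ε * n)) * K x z ≤ ∑ x', P x' * K x' z := by
        calc exp (-(2 * ε * n)) * K x z
            = ∑ x', P x' * (exp (-(2 * ε * n)) * K x z) := by
              rw [← Finset.sum_mul, hP1, one_mul]
          _ ≤ ∑ x', P x' * K x' z := by
              apply Finset.sum_le_sum
              intro x' _
              apply mul_le_mul_of_nonneg_left _ (hP0 x')
              have := hratio x x' z
              rw [exp_neg]
              rw [inv_mul_le_iff₀ (exp_pos _)]
              linarith [this]
      have hQpos : 0 < ∑ x', P x' * K x' z :=
        lt_of_lt_of_le (by positivity) hQ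
      rw [log_le_iff_le_exp (div_pos hKx hQpos)]
      rw [div_le_iff₀ hQpos]
      calc K x z = exp (2*ε*n) * (exp (-(2 * ε * n)) * K x z) := by
            rw [← mul_assoc, ← exp_add]; simp
        _ ≤ exp (2*ε*n) * ∑ x', P x' * K x' z :=
            mul_le_mul_of_nonneg_left hQ (le_of_lt (exp_pos _))
  -- sum up
  unfold infoCost
  calc ∑ x, ∑ z, P x * K x z * log (K x z / ∑ x', P x' * K x' z)
      ≤ ∑ x, ∑ z, P x * K x z * (2 * ε * n) := by
        apply Finset.sum_le_sum; intro x _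
        apply Finset.sum_le_sum; intro z _
        exact hterm x z
    _ = 2 * ε * n := by
        have : ∀ x : Histo d n, ∑ z, P x * K x z * (2 * ε * n)
            = P x * (2 * ε * n) := by
          intro x
          rw [← Finset.sum_mul, ← Finset.mul_sum, hM1, mul_one]
        simp_rw [this]
        rw [← Finset.sum_mul, hP1, one_mul]
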